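/- Let A_1,...,A_K be n×n complex matrices such that the Hurwitz–Radon quadratic form Q(x) = Σ_{i≤j} x_i x_j d_{ij} (with d_{ij} = ‖A_iA_j^H + A_jA_i^H‖_F²) decomposes as Q(x) = Q_1(x_{Γ_1}) + Q_2(x_{Γ_2}) for a nontrivial partition {Γ_1, Γ_2} of {1,...,K} (i.e., d_{ij} = 0 for all i ∈ Γ_1, j ∈ Γ_2). Then for every channel matrix H, the Gram matrix H_eq^T H_eq of the equivalent channel is block-diagonal with respect to the partition {Γ_1, Γ_2}. -/

import Mathlib

/-!
Column `k` of `H_eq` is the realified vectorization of `H A_k`, so the Gram entry `(i, j)` is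
`Re tr (H A_i (H A_j)ᴴ)`. Since `Re tr Mᴴ = Re tr M`, twice this is
`Re tr (H (A_i A_jᴴ + A_j A_iᴴ) Hᴴ)`, and `d_ij = 0` forces the anticommutator
`A_i A_jᴴ + A_j A_iᴴ` itself to vanish.
-/

open Matrix Finset Kronecker

/-- The realification `Ȟ` of a complex channel matrix `H`. -/
def checkMat {nr n : ℕ} (H : Matrix (Fin nr) (Fin n) ℂ) :
    Matrix (Fin nr × Fin 2) (Fin n × Fin 2) ℝ := fun p q =>
  if p.2 = 0 then (if q.2 = 0 then (H p.1 q.1).re else -(H p.1 q.1).im)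
  else (if q.2 = 0 then (H p.1 q.1).im else (H p.1 q.1).re)

/-- The generator matrix `G`: its `k`-th column is the realified vectorization of `A_k`. -/
def genMat {n K : ℕ} (A : Fin K → Matrix (Fin n) (Fin n) ℂ) :
    Matrix (Fin n × Fin n × Fin 2) (Fin K) ℝ := fun idx k =>
  if idx.2.2 = 0 then (A k idx.2.1 idx.1).re else (A k idx.2.1 idx.1).im

/-- The equivalent real channel matrix `H_eq = (I_n ⊗ Ȟ)·G`. -/
def heqMat {nr n K : ℕ} (H : Matrix (Fin nr) (Fin n) ℂ)
    (A : Fin K → Matrix (Fin n) (Fin n) ℂ) :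
    Matrix (Fin n × (Fin nr × Fin 2)) (Fin K) ℝ :=
  ((1 : Matrix (Fin n) (Fin n) ℝ) ⊗ₖ checkMat H) * genMat A

theorem Matrix.eq_zero_of_sum_sum_normSq_eq_zero {m n : Type*} [Fintype m] [Fintype n]
    {M : Matrix m n ℂ} (h : ∑ a, ∑ b, Complex.normSq (M a b) = 0) : M = 0 := by
  ext a b
  have hrow := (Fintype.sum_eq_zero_iff_of_nonneg fun a ↦
    Fintype.sum_nonneg fun b ↦ Complex.normSq_nonneg (M a b)).mp h
  have hentry := (Fintype.sum_eq_zero_iff_of_nonneg fun b ↦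
    Complex.normSq_nonneg (M a b)).mp (congrFun hrow a)
  exact Complex.normSq_eq_zero.mp (congrFun hentry b)

theorem Matrix.re_trace_mul_conjTranspose {m n : Type*} [Fintype m] [Fintype n]
    (B C : Matrix m n ℂ) :
    (trace (B * Cᴴ)).re = ∑ r, ∑ s, ((B r s).re * (C r s).re + (B r s).im * (C r s).im) := by
  simp only [trace, diag_apply, mul_apply, conjTranspose_apply, Complex.re_sum, Complex.mul_re,
    Complex.star_def, Complex.conj_re, Complex.conj_im, mul_neg, sub_neg_eq_add]

theorem Matrix.re_trace_eq_zero_of_add_conjTranspose_eq_zero {m : Type*} [Fintype m]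
    {M : Matrix m m ℂ} (h : M + Mᴴ = 0) : M.trace.re = 0 := by
  have := congrArg (fun X ↦ (trace X).re) h
  simp only [trace_add, trace_conjTranspose, Complex.add_re, Complex.star_def, Complex.conj_re,
    trace_zero, Complex.zero_re] at this
  linarith

theorem heqMat_apply {nr n K : ℕ} (H : Matrix (Fin nr) (Fin n) ℂ)
    (A : Fin K → Matrix (Fin n) (Fin n) ℂ) (s : Fin n) (r : Fin nr) (t : Fin 2) (k : Fin K) :
    heqMat H A (s, (r, t)) k =
      if t = 0 then ((H * A k) r s).re else ((H * A k) r s).im := by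
  simp only [heqMat, mul_apply, kroneckerMap_apply, one_apply, Fintype.sum_prod_type, ite_mul,
    one_mul, zero_mul]
  fin_cases t <;>
    simp [checkMat, genMat, Fin.sum_univ_two, Complex.re_sum, Complex.im_sum,
      Complex.mul_re, Complex.mul_im, Finset.sum_add_distrib, Finset.sum_neg_distrib,
      sub_eq_add_neg, add_comm]

theorem gram_heqMat_apply {nr n K : ℕ} (H : Matrix (Fin nr) (Fin n) ℂ)
    (A : Fin K → Matrix (Fin n) (Fin n) ℂ) (i j : Fin K) :
    ((heqMat H A)ᵀ * heqMat H A) i j = (trace (H * A i * (H * A j)ᴴ)).re := by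
  rw [re_trace_mul_conjTranspose, Finset.sum_comm]
  simp only [mul_apply, transpose_apply, Fintype.sum_prod_type, Fin.sum_univ_two, heqMat_apply,
    if_true, if_neg one_ne_zero]

theorem gram_matrix_block_diagonal_of_hrqf_decomposes_general {nr n K : ℕ}
    (A : Fin K → Matrix (Fin n) (Fin n) ℂ)
    (Γ : Fin K → Fin 2)
    (hd : ∀ i j : Fin K, Γ i = 0 → Γ j = 1 →
      ∑ a, ∑ b, Complex.normSq ((A i * (A j)ᴴ + A j * (A i)ᴴ) a b) = 0)
    (H : Matrix (Fin nr) (Fin n) ℂ) :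
    ∀ i j : Fin K, Γ i = 0 → Γ j = 1 →
      ((heqMat H A)ᵀ * heqMat H A) i j = 0 := by
  intro i j hi hj
  have hanti : A i * (A j)ᴴ + A j * (A i)ᴴ = 0 :=
    eq_zero_of_sum_sum_normSq_eq_zero (hd i j hi hj)
  have hskew : H * A i * (H * A j)ᴴ + (H * A i * (H * A j)ᴴ)ᴴ = 0 := by
    calc _ = H * (A i * (A j)ᴴ + A j * (A i)ᴴ) * Hᴴ := by
          simp only [conjTranspose_mul, conjTranspose_conjTranspose, Matrix.mul_add,
            Matrix.add_mul, Matrix.mul_assoc]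
      _ = 0 := by rw [hanti, Matrix.mul_zero, Matrix.zero_mul]
  rw [gram_heqMat_apply]
  exact re_trace_eq_zero_of_add_conjTranspose_eq_zero hskew

/-- If the HRQF decomposes over a partition `{Γ_1, Γ_2}` of the variables
(`d_{ij} = 0` for `i ∈ Γ_1`, `j ∈ Γ_2`), then for every channel matrix `H` the
Gram matrix `H_eqᵀ H_eq` of the equivalent channel is block-diagonal with respect
to that partition. -/
theorem gram_matrix_block_diagonal_of_hrqf_decomposes {nr n K : ℕ}
    (A : Fin K → Matrix (Fin n) (Fin n) ℂ)
    (Γ : Fin K → Fin 2)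
    (hΓ : (∃ i, Γ i = 0) ∧ (∃ j, Γ j = 1))
    (hd : ∀ i j : Fin K, Γ i = 0 → Γ j = 1 →
      ∑ a, ∑ b, Complex.normSq ((A i * (A j)ᴴ + A j * (A i)ᴴ) a b) = 0)
    (H : Matrix (Fin nr) (Fin n) ℂ) :
    ∀ i j : Fin K, Γ i = 0 → Γ j = 1 →
      ((heqMat H A)ᵀ * heqMat H A) i j = 0 :=
  gram_matrix_block_diagonal_of_hrqf_decomposes_general A Γ hd H
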